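/- arXiv:0806.2991 — 2 statements merged into one kernel-verified Lean document; each statement's English description precedes it below -/
import Mathlib

section
/- Let (A_i)_{i≥1} and (B_i)_{i≥1} be d×d complex matrices with all A_i invertible, and let (X_i)_{i≥0} be d×d matrices with X_0 = 0, X_1 = I_d, satisfying the three-term recursion A_i X_{i-1} + B_i X_i + A_{i+1}^† X_{i+1} = 0 for i ≥ 1. Let G_{dn} be the block tridiagonal Hermitian matrix with diagonal blocks B_1,…,B_n, subdiagonal blocks A_2,…,A_n and superdiagonal blocks A_2^†,…,A_n^†. Then det G_{dn} = (−1)^{dn} (∏_{i=2}^{n+1} det A_i) · det X_{n+1} (up to sign, |det G_{dn}| = ∏_{i=2}^{n+1} |det A_i| · |det X_{n+1}|). -/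
/-!
Right-multiply `G` by the block shear `U` whose first block column is `(X 1, …, X n)` and which
is the identity elsewhere, so `det U = det (X 1) = 1`. This replaces the first block column of `G`
by `G (X 1, …, X n)ᵀ`, which by the recursion (and `X 0 = 0`) vanishes except in the last block
row, where it is `-(A (n+1))ᴴ * X (n+1)`. Rotating that column to the end changes the
determinant only by a sign and leaves a block lower-triangular matrix with diagonal blocks
`(A 2)ᴴ, …, (A n)ᴴ, -(A (n+1))ᴴ * X (n+1)`.
-/

open scoped Matrix BigOperators

/-- The block tridiagonal Hermitian matrix with diagonal blocks `B 1, …, B n`,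
subdiagonal blocks `A 2, …, A n` and superdiagonal blocks `(A 2)ᴴ, …, (A n)ᴴ`
(blocks indexed here by `Fin n`, with block `(i, j)` for 1-based indices `i+1, j+1`). -/
def blockTridiag {d : ℕ} (n : ℕ) (A B : ℕ → Matrix (Fin d) (Fin d) ℂ) :
    Matrix (Fin n × Fin d) (Fin n × Fin d) ℂ :=
  Matrix.of fun p q =>
    if (p.1 : ℕ) = (q.1 : ℕ) then B ((p.1 : ℕ) + 1) p.2 q.2
    else if (p.1 : ℕ) = (q.1 : ℕ) + 1 then A ((p.1 : ℕ) + 1) p.2 q.2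
    else if (q.1 : ℕ) = (p.1 : ℕ) + 1 then (A ((q.1 : ℕ) + 1))ᴴ p.2 q.2
    else 0

open Matrix

theorem Fin.sum_ite_val_eq {M : Type*} [AddCommMonoid M] (n c : ℕ) (v : M) :
    ∑ k : Fin n, (if (k : ℕ) = c then v else 0) = if c < n then v else 0 := by
  rw [Fin.sum_univ_eq_sum_range (fun k => if k = c then v else 0), Finset.sum_ite_eq']
  simp

namespace Matrix

theorem norm_det_permute' {n R : Type*} [Fintype n] [DecidableEq n] [SeminormedCommRing R]
    [NormOneClass R] (σ : Equiv.Perm n) (M : Matrix n n R) :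
    ‖(M.submatrix id σ).det‖ = ‖M.det‖ := by
  rcases Int.units_eq_one_or (Equiv.Perm.sign σ) with h | h <;> simp [det_permute', h]

section BlockTriangular

variable {ι κ R : Type*} [Fintype ι] [LinearOrder ι] [Fintype κ] [DecidableEq κ] [CommRing R]

theorem det_comp_of_isUpperTriangular (M : Matrix ι ι (Matrix κ κ R))
    (hM : M.IsUpperTriangular) : (comp ι ι κ κ R M).det = ∏ i, (M i i).det := by
  have hblock : (comp ι ι κ κ R M).BlockTriangular Prod.fst := fun p q hpq => by simp [hM hpq]
  rw [hblock.det_fintype]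
  refine Fintype.prod_congr _ _ fun i => ?_
  let e : {p : ι × κ // p.1 = i} ≃ κ :=
    { toFun := fun p => p.1.2
      invFun := fun a => ⟨(i, a), rfl⟩
      left_inv := by rintro ⟨⟨j, a⟩, rfl⟩; rfl
      right_inv := fun _ => rfl }
  have hblock_i : (comp ι ι κ κ R M).toSquareBlock Prod.fst i = (M i i).submatrix e e := by
    ext ⟨⟨j, a⟩, hj⟩ ⟨⟨k, b⟩, hk⟩
    dsimp only at hj hk
    subst hj hk
    rfl
  rw [hblock_i, det_submatrix_equiv_self]

theorem det_comp_of_isLowerTriangular (M : Matrix ι ι (Matrix κ κ R))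
    (hM : M.IsLowerTriangular) : (comp ι ι κ κ R M).det = ∏ i, (M i i).det := by
  rw [← det_transpose, transpose_comp,
    det_comp_of_isUpperTriangular _ fun i j hij => by simp [show M j i = 0 from hM hij]]
  simp

end BlockTriangular

end Matrix

section BlockTridiag

variable {d : ℕ}

def blockTridiagBlocks (n : ℕ) (A B : ℕ → Matrix (Fin d) (Fin d) ℂ) :
    Matrix (Fin n) (Fin n) (Matrix (Fin d) (Fin d) ℂ) :=
  of fun i j =>
    if (i : ℕ) = j then B (i + 1)
    else if (i : ℕ) = j + 1 then A (i + 1)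
    else if (j : ℕ) = i + 1 then (A (j + 1))ᴴ
    else 0

theorem comp_blockTridiagBlocks (n : ℕ) (A B : ℕ → Matrix (Fin d) (Fin d) ℂ) :
    comp _ _ _ _ ℂ (blockTridiagBlocks n A B) = blockTridiag n A B := by
  ext p q
  simp only [blockTridiag, blockTridiagBlocks, comp_apply, of_apply]
  split_ifs <;> rfl

def shearBlocks (n : ℕ) (X : ℕ → Matrix (Fin d) (Fin d) ℂ) :
    Matrix (Fin n) (Fin n) (Matrix (Fin d) (Fin d) ℂ) :=
  of fun i j => if (j : ℕ) = 0 then X (i + 1) else if i = j then 1 else 0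

theorem det_comp_shearBlocks (n : ℕ) (X : ℕ → Matrix (Fin d) (Fin d) ℂ) (hX1 : X 1 = 1) :
    (comp _ _ _ _ ℂ (shearBlocks n X)).det = 1 := by
  rw [det_comp_of_isLowerTriangular]
  · refine Finset.prod_eq_one fun i _ => ?_
    by_cases hi : (i : ℕ) = 0 <;> simp [shearBlocks, hi, hX1]
  · intro i j hij
    have hij : (i : ℕ) < j := hij
    simp [shearBlocks, show (j : ℕ) ≠ 0 by omega, Fin.ne_of_lt hij]

theorem sum_blockTridiagBlocks_mul (n : ℕ) (A B X : ℕ → Matrix (Fin d) (Fin d) ℂ)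
    (hX0 : X 0 = 0)
    (hrec : ∀ i, 1 ≤ i → A i * X (i - 1) + B i * X i + (A (i + 1))ᴴ * X (i + 1) = 0)
    (i : Fin n) :
    ∑ k, blockTridiagBlocks n A B i k * X (k + 1) =
      if (i : ℕ) + 1 = n then -((A (n + 1))ᴴ * X (n + 1)) else 0 := by
  -- With truncated subtraction the `i - 1` term is `A 1 * X 0 = 0` when `i = 0`.
  have hsplit : ∀ k : Fin n, blockTridiagBlocks n A B i k * X (k + 1) =
      (if (k : ℕ) = i then B (i + 1) * X (i + 1) else 0) +
      (if (k : ℕ) = i - 1 then A (i + 1) * X i else 0) +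
      (if (k : ℕ) = i + 1 then (A (i + 2))ᴴ * X (i + 2) else 0) := by
    rintro ⟨k, hk⟩
    obtain ⟨i, hi⟩ := i
    simp only [blockTridiagBlocks, of_apply]
    split_ifs <;> try omega
    all_goals subst_vars
    · obtain rfl : i = 0 := by omega
      simp [hX0]
    · simp
    · rw [Nat.sub_add_cancel (by omega)]
      simp
    · simp
    · simp
  rw [Finset.sum_congr rfl fun k _ => hsplit k, Finset.sum_add_distrib, Finset.sum_add_distrib,
    Fin.sum_ite_val_eq, Fin.sum_ite_val_eq, Fin.sum_ite_val_eq, if_pos i.isLt,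
    if_pos (by omega)]
  have hrow := hrec (i + 1) (by omega)
  rw [Nat.add_sub_cancel] at hrow
  split_ifs with hlt hlast hlast
  · omega
  · rw [add_comm (B _ * _), hrow]
  · rw [show n + 1 = (i : ℕ) + 1 + 1 by omega, add_zero, add_comm (B _ * _),
      eq_neg_iff_add_eq_zero, hrow]
  · omega

theorem blockTridiagBlocks_mul_shearBlocks_apply (n : ℕ) (A B X : ℕ → Matrix (Fin d) (Fin d) ℂ)
    (hX0 : X 0 = 0)
    (hrec : ∀ i, 1 ≤ i → A i * X (i - 1) + B i * X i + (A (i + 1))ᴴ * X (i + 1) = 0)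
    (i j : Fin n) :
    (blockTridiagBlocks n A B * shearBlocks n X) i j =
      if (j : ℕ) = 0 then (if (i : ℕ) + 1 = n then -((A (n + 1))ᴴ * X (n + 1)) else 0)
      else blockTridiagBlocks n A B i j := by
  rw [mul_apply]
  by_cases hj : (j : ℕ) = 0
  · simp only [shearBlocks, of_apply, hj, if_true]
    exact sum_blockTridiagBlocks_mul n A B X hX0 hrec i
  · simp [shearBlocks, hj, of_apply]

def triangularizedBlocks (m : ℕ) (A B X : ℕ → Matrix (Fin d) (Fin d) ℂ) :
    Matrix (Fin (m + 1)) (Fin (m + 1)) (Matrix (Fin d) (Fin d) ℂ) :=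
  (blockTridiagBlocks (m + 1) A B * shearBlocks (m + 1) X).submatrix id (finRotate (m + 1))

theorem norm_det_comp_triangularizedBlocks (m : ℕ) (A B X : ℕ → Matrix (Fin d) (Fin d) ℂ)
    (hX1 : X 1 = 1) :
    ‖(comp _ _ _ _ ℂ (triangularizedBlocks m A B X)).det‖ = ‖(blockTridiag (m + 1) A B).det‖ := by
  rw [triangularizedBlocks]
  set G := blockTridiagBlocks (m + 1) A B
  set U := shearBlocks (m + 1) X
  have hcomp_mul : comp _ _ _ _ ℂ G * comp _ _ _ _ ℂ U = comp _ _ _ _ ℂ (G * U) :=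
    (map_mul (compRingEquiv _ _ ℂ) G U).symm
  rw [← comp_blockTridiagBlocks, ← mul_one (comp _ _ _ _ ℂ G).det, ← det_comp_shearBlocks _ X hX1,
    ← det_mul, hcomp_mul]
  exact norm_det_permute' (Equiv.prodCongr (finRotate (m + 1)) (Equiv.refl (Fin d)))
    (comp _ _ _ _ ℂ (G * U))

theorem isLowerTriangular_triangularizedBlocks (m : ℕ) (A B X : ℕ → Matrix (Fin d) (Fin d) ℂ)
    (hX0 : X 0 = 0)
    (hrec : ∀ i, 1 ≤ i → A i * X (i - 1) + B i * X i + (A (i + 1))ᴴ * X (i + 1) = 0) :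
    (triangularizedBlocks m A B X).IsLowerTriangular := by
  intro i j hij
  have hij : (i : ℕ) < j := hij
  rw [triangularizedBlocks, submatrix_apply, id,
    blockTridiagBlocks_mul_shearBlocks_apply _ _ _ _ hX0 hrec]
  by_cases hj : j = Fin.last m
  · have hi : (i : ℕ) < m := by simpa [hj] using hij
    simp [hj, hi.ne]
  · have : (j : ℕ) < m := Fin.val_lt_last hj
    simp only [blockTridiagBlocks, of_apply, coe_finRotate_of_ne_last hj]
    rw [if_neg (by omega), if_neg (by omega), if_neg (by omega), if_neg (by omega)]

theorem norm_det_triangularizedBlocks_apply_self (m : ℕ) (A B X : ℕ → Matrix (Fin d) (Fin d) ℂ)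
    (hX0 : X 0 = 0)
    (hrec : ∀ i, 1 ≤ i → A i * X (i - 1) + B i * X i + (A (i + 1))ᴴ * X (i + 1) = 0)
    (i : Fin (m + 1)) :
    ‖(triangularizedBlocks m A B X i i).det‖ =
      ‖(A (i + 2)).det‖ * if i = Fin.last m then ‖(X (m + 2)).det‖ else 1 := by
  rw [triangularizedBlocks, submatrix_apply, id,
    blockTridiagBlocks_mul_shearBlocks_apply _ _ _ _ hX0 hrec]
  by_cases hi : i = Fin.last m
  · subst hi
    simp [det_neg, det_mul, det_conjTranspose]
  · simp only [blockTridiagBlocks, of_apply, coe_finRotate_of_ne_last hi]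
    simp [hi, show (i : ℕ) ≠ i + 1 + 1 by omega, det_conjTranspose]

end BlockTridiag

theorem abs_det_blockTridiag_general (d n : ℕ) (A B X : ℕ → Matrix (Fin d) (Fin d) ℂ)
    (hX0 : X 0 = 0) (hX1 : X 1 = 1)
    (hrec : ∀ i, 1 ≤ i → A i * X (i - 1) + B i * X i + (A (i + 1))ᴴ * X (i + 1) = 0) :
    ‖(blockTridiag n A B).det‖
      = (∏ i ∈ Finset.range n, ‖(A (i + 2)).det‖)
        * ‖(X (n + 1)).det‖ := by
  cases n with
  | zero => simp [hX1]
  | succ m =>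
    rw [← norm_det_comp_triangularizedBlocks m A B X hX1,
      det_comp_of_isLowerTriangular _ (isLowerTriangular_triangularizedBlocks m A B X hX0 hrec),
      norm_prod]
    simp_rw [norm_det_triangularizedBlocks_apply_self m A B X hX0 hrec]
    rw [Finset.prod_mul_distrib, Finset.prod_ite_eq', if_pos (Finset.mem_univ _),
      Fin.prod_univ_eq_prod_range (fun i => ‖(A (i + 2)).det‖)]

/-- **Determinant identity for block tridiagonal matrices (Narula-type decomposition).**
Let `(A i)` and `(B i)` be `d × d` complex matrices with all `A i` invertible, and
`(X i)` satisfy `X 0 = 0`, `X 1 = 1`, and the three-term recursion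
`A i * X (i-1) + B i * X i + (A (i+1))ᴴ * X (i+1) = 0` for `i ≥ 1`.  Then, with
`G` the block tridiagonal matrix built from the `B`'s and `A`'s,
`|det G| = (∏_{i=2}^{n+1} |det (A i)|) * |det (X (n+1))|`. -/
theorem abs_det_blockTridiag (d n : ℕ) (A B X : ℕ → Matrix (Fin d) (Fin d) ℂ)
    (hA : ∀ i, IsUnit (A i).det)
    (hX0 : X 0 = 0) (hX1 : X 1 = 1)
    (hrec : ∀ i, 1 ≤ i → A i * X (i - 1) + B i * X i + (A (i + 1))ᴴ * X (i + 1) = 0) :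
    ‖(blockTridiag n A B).det‖
      = (∏ i ∈ Finset.range n, ‖(A (i + 2)).det‖)
        * ‖(X (n + 1)).det‖ :=
  abs_det_blockTridiag_general d n A B X hX0 hX1 hrec
end

section
/- Let g, h : ℂ → ℝ ∪ {−∞} be subharmonic functions on ℂ that agree on ℂ \ ℝ. Then g = h on all of ℂ. -/
/-!
A circle around a real point meets `ℝ` in a null set of angles, so there `g = h` almost everywhere
on the circle and the sub-mean-value inequality for `g` bounds `g z` by the circle mean of `h`.
If `h z < c`, upper semicontinuity makes `h < c` on all small circles, so `g z ≤ c`. Hence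
`g ≤ h` on `ℝ`, and `h ≤ g` by symmetry.
-/

open MeasureTheory
open scoped ENNReal

noncomputable section

/-- The canonical map `EReal → ℝ≥0∞` (nonpositive values go to `0`, `⊤` to `⊤`). -/
def erealToENNReal (x : EReal) : ℝ≥0∞ :=
  if x = ⊤ then ⊤ else ENNReal.ofReal x.toReal

/-- The mean of an `EReal`-valued function over the circle of center `z` and radius `r`,
defined as the difference of the lower integrals of its positive and negative parts
(normalized by `(2π)⁻¹`, the normalization being applied outside). -/
def circleIntegralE (g : ℂ → EReal) (z : ℂ) (r : ℝ) : EReal :=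
  ((∫⁻ θ in Set.Ioc (0 : ℝ) (2 * Real.pi),
      erealToENNReal (g (z + r * Complex.exp (θ * Complex.I))) : ℝ≥0∞) : EReal)
    - ((∫⁻ θ in Set.Ioc (0 : ℝ) (2 * Real.pi),
      erealToENNReal (-(g (z + r * Complex.exp (θ * Complex.I)))) : ℝ≥0∞) : EReal)

/-- A function `g : ℂ → ℝ ∪ {−∞}` is subharmonic if it is upper semicontinuous and
satisfies the sub-mean-value inequality on every circle. -/
def SubharmonicE (g : ℂ → EReal) : Prop :=
  UpperSemicontinuous g ∧
    ∀ z : ℂ, ∀ r : ℝ, 0 < r →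
      g z ≤ (((2 * Real.pi)⁻¹ : ℝ) : EReal) * circleIntegralE g z r

open Set Metric
open scoped Real

lemma circleIntegralE_eq_circleMap (g : ℂ → EReal) (z : ℂ) (r : ℝ) :
    circleIntegralE g z r =
      ((∫⁻ θ in Ioc 0 (2 * π), (g (circleMap z r θ)).toENNReal : ℝ≥0∞) : EReal)
        - ((∫⁻ θ in Ioc 0 (2 * π), (-g (circleMap z r θ)).toENNReal : ℝ≥0∞) : EReal) :=
  rfl

lemma circleIntegralE_congr_ae {g h : ℂ → EReal} {z : ℂ} {r : ℝ}
    (hgh : ∀ᵐ θ, g (circleMap z r θ) = h (circleMap z r θ)) :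
    circleIntegralE g z r = circleIntegralE h z r := by
  simp only [circleIntegralE_eq_circleMap]
  congr 2 <;>
    exact lintegral_congr_ae (ae_restrict_of_ae (hgh.mono fun θ hθ => by simp only [hθ]))

lemma circleIntegralE_le_of_forall_le {h : ℂ → EReal} {z : ℂ} {r c : ℝ}
    (hc : ∀ θ, h (circleMap z r θ) ≤ c) :
    circleIntegralE h z r ≤ (2 * π * c : ℝ) := by
  have hvol : volume (Ioc 0 (2 * π)) = ENNReal.ofReal (2 * π) := by simp
  have hpos : ∫⁻ θ in Ioc 0 (2 * π), (h (circleMap z r θ)).toENNReal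
      ≤ ENNReal.ofReal (2 * π * c) := by
    calc ∫⁻ θ in Ioc 0 (2 * π), (h (circleMap z r θ)).toENNReal
        ≤ ∫⁻ _ in Ioc 0 (2 * π), ENNReal.ofReal c :=
          lintegral_mono fun θ => EReal.toENNReal_le_toENNReal (hc θ)
      _ = ENNReal.ofReal (2 * π * c) := by
          rw [setLIntegral_const, hvol, ← ENNReal.ofReal_mul' Real.two_pi_pos.le, mul_comm]
  have hneg : ENNReal.ofReal (2 * π * -c)
      ≤ ∫⁻ θ in Ioc 0 (2 * π), (-h (circleMap z r θ)).toENNReal := by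
    calc ENNReal.ofReal (2 * π * -c) = ∫⁻ _ in Ioc 0 (2 * π), ENNReal.ofReal (-c) := by
          rw [setLIntegral_const, hvol, ← ENNReal.ofReal_mul' Real.two_pi_pos.le, mul_comm]
      _ ≤ ∫⁻ θ in Ioc 0 (2 * π), (-h (circleMap z r θ)).toENNReal :=
          lintegral_mono fun θ => EReal.toENNReal_le_toENNReal (EReal.neg_le_neg_iff.2 (hc θ))
  calc circleIntegralE h z r
      ≤ ((ENNReal.ofReal (2 * π * c) : ℝ≥0∞) : EReal)
          - ((ENNReal.ofReal (2 * π * -c) : ℝ≥0∞) : EReal) := by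
        rw [circleIntegralE_eq_circleMap]
        exact EReal.sub_le_sub (EReal.coe_ennreal_le_coe_ennreal_iff.2 hpos)
          (EReal.coe_ennreal_le_coe_ennreal_iff.2 hneg)
    _ = (2 * π * c : ℝ) := by
        rw [EReal.coe_ennreal_ofReal, EReal.coe_ennreal_ofReal, ← EReal.coe_sub, mul_neg,
          max_zero_sub_eq_self]

lemma ae_im_circleMap_ne_zero {z : ℂ} (hz : z.im = 0) {r : ℝ} (hr : r ≠ 0) :
    ∀ᵐ θ : ℝ, (circleMap z r θ).im ≠ 0 := by
  have hsin : volume {θ : ℝ | Real.sin θ = 0} = 0 := by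
    refine measure_mono_null (fun θ hθ => ?_) ((countable_range fun n : ℤ => n * π).measure_zero _)
    exact Real.sin_eq_zero_iff.1 hθ
  refine measure_mono_null (fun θ hθ => ?_) hsin
  have him : (circleMap z r θ).im = r * Real.sin θ := by
    rw [← sub_add_cancel (circleMap z r θ) z, circleMap_sub_center, Complex.add_im,
      circleMap_zero_im, hz, add_zero]
  simpa [him, hr] using hθ

lemma le_of_subMeanValue_of_ae_eq_circleMap {g h : ℂ → EReal} {z : ℂ}
    (hg : ∀ r : ℝ, 0 < r → g z ≤ (((2 * π)⁻¹ : ℝ) : EReal) * circleIntegralE g z r)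
    (hh : UpperSemicontinuousAt h z)
    (hgh : ∀ r : ℝ, 0 < r → ∀ᵐ θ, g (circleMap z r θ) = h (circleMap z r θ)) :
    g z ≤ h z := by
  refine EReal.le_of_forall_lt_iff_le.1 fun c hc => ?_
  obtain ⟨ε, hε, hball⟩ := Metric.eventually_nhds_iff_ball.1 (hh c hc)
  have hcircle : ∀ θ, h (circleMap z (ε / 2) θ) ≤ c := fun θ =>
    (hball _ (sphere_subset_ball (half_lt_self hε)
      (circleMap_mem_sphere z (half_pos hε).le θ))).le
  calc g z ≤ (((2 * π)⁻¹ : ℝ) : EReal) * circleIntegralE h z (ε / 2) := by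
        rw [← circleIntegralE_congr_ae (hgh _ (half_pos hε))]
        exact hg _ (half_pos hε)
    _ ≤ (((2 * π)⁻¹ : ℝ) : EReal) * (2 * π * c : ℝ) :=
        mul_le_mul_of_nonneg_left (circleIntegralE_le_of_forall_le hcircle)
          (EReal.coe_nonneg.2 (by positivity))
    _ = c := by
        rw [← EReal.coe_mul, inv_mul_cancel_left₀ Real.two_pi_pos.ne']

lemma SubharmonicE.le_of_eq_off_real {g h : ℂ → EReal} (hg : SubharmonicE g)
    (hh : UpperSemicontinuous h) (heq : ∀ z : ℂ, z.im ≠ 0 → g z = h z) (z : ℂ) :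
    g z ≤ h z := by
  rcases eq_or_ne z.im 0 with hz | hz
  · refine le_of_subMeanValue_of_ae_eq_circleMap (hg.2 z) (hh z) fun r hr => ?_
    exact (ae_im_circleMap_ne_zero hz hr.ne').mono fun θ => heq _
  · exact (heq z hz).le

theorem subharmonic_eq_of_eq_off_real_general (g h : ℂ → EReal)
    (hg : SubharmonicE g) (hh : SubharmonicE h)
    (heq : ∀ z : ℂ, z.im ≠ 0 → g z = h z) :
    g = h :=
  funext fun z => le_antisymm (hg.le_of_eq_off_real hh.1 heq z)
    (hh.le_of_eq_off_real hg.1 (fun w hw => (heq w hw).symm) z)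

/-- **Identity principle for subharmonic functions off the real axis.** Two subharmonic
functions `g, h : ℂ → ℝ ∪ {−∞}` that agree on `ℂ \ ℝ` agree on all of `ℂ`. -/
theorem subharmonic_eq_of_eq_off_real (g h : ℂ → EReal)
    (hg : SubharmonicE g) (hh : SubharmonicE h)
    (heq : ∀ z : ℂ, z.im ≠ 0 → g z = h z)
    (hg' : ∀ z, g z ≠ ⊤) (hh' : ∀ z, h z ≠ ⊤) :
    g = h :=
  subharmonic_eq_of_eq_off_real_general g h hg hh heq

end
end
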